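/- For n ≥ 1, no triangulation of a convex (n+3)-gon is fixed by the rotation through one vertex; equivalently, every orbit of the rotation action on triangulations has size at least 2. -/

import Mathlib

namespace CTA

/-- `x` lies strictly between `a` and `b` going anticlockwise around the `m`-gon. -/
def Btw (m : ℕ) (a x b : ZMod m) : Prop :=
  0 < (x - a).val ∧ (x - a).val < (b - a).val

/-- `p` is a diagonal of the convex `m`-gon: its endpoints are distinct and non-adjacent. -/
def IsPolyDiag (m : ℕ) (p : Sym2 (ZMod m)) : Prop :=
  ∀ a b : ZMod m, p = s(a, b) → 2 ≤ (b - a).val ∧ 2 ≤ (a - b).val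

/-- Two diagonals cross (intersect in an interior point of both). -/
def Crosses (m : ℕ) (p q : Sym2 (ZMod m)) : Prop :=
  ∃ a b c d : ZMod m, p = s(a, b) ∧ q = s(c, d) ∧ Btw m a c b ∧ Btw m b d a

/-- A triangulation: a maximal set of pairwise non-crossing diagonals. -/
def IsTriangulation (m : ℕ) (Δ : Set (Sym2 (ZMod m))) : Prop :=
  (∀ p ∈ Δ, IsPolyDiag m p) ∧
  (∀ p ∈ Δ, ∀ q ∈ Δ, ¬ Crosses m p q) ∧
  ∀ Δ' : Set (Sym2 (ZMod m)), Δ ⊆ Δ' → (∀ p ∈ Δ', IsPolyDiag m p) →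
    (∀ p ∈ Δ', ∀ q ∈ Δ', ¬ Crosses m p q) → Δ' = Δ

/-- A diagonal is close to the border if its endpoints are at boundary distance exactly 2. -/
def CloseBorder (m : ℕ) (p : Sym2 (ZMod m)) : Prop :=
  ∃ a b : ZMod m, p = s(a, b) ∧ min (b - a).val (a - b).val = 2

/-- Rotation of a triangulation by `k` vertices. -/
def rotate (m : ℕ) (k : ZMod m) (Δ : Set (Sym2 (ZMod m))) : Set (Sym2 (ZMod m)) :=
  Sym2.map (· + k) '' Δ

/-- The orbit of a triangulation under the rotation action of `ZMod m`. -/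
def rotOrbit (m : ℕ) (Δ : Set (Sym2 (ZMod m))) : Set (Set (Sym2 (ZMod m))) :=
  {Δ' | ∃ k : ZMod m, Δ' = rotate m k Δ}

/-- The number of orbits of the rotation action on triangulations of the `m`-gon. -/
noncomputable def numOrbits (m : ℕ) : ℕ :=
  Nat.card {O : Set (Set (Sym2 (ZMod m))) // ∃ Δ, IsTriangulation m Δ ∧ O = rotOrbit m Δ}

/-- The `n`-th Catalan number `(2n)!/((n+1)!·n!)`. -/
def catalanC (n : ℕ) : ℕ :=
  Nat.factorial (2 * n) / (Nat.factorial (n + 1) * Nat.factorial n)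

/-- The diagonal close to the border cutting off the vertex `v`. -/
def cutDiag (m : ℕ) (v : ZMod m) : Sym2 (ZMod m) := s(v - 1, v + 1)

/-- Deleting the vertex `v` from the `(m+1)`-gon: the order-preserving relabelling of the
remaining vertices by `ZMod m`. -/
def delVtx (m : ℕ) (v : ZMod (m + 1)) (x : ZMod (m + 1)) : ZMod m :=
  if x.val < v.val then (x.val : ZMod m) else ((x.val - 1 : ℕ) : ZMod m)

/-- Inserting a new vertex on the border edge between `a` and `a+1`:
the induced relabelling of old vertices into `ZMod (m+1)`. -/
def insVtx (m : ℕ) (a : ZMod m) (x : ZMod m) : ZMod (m + 1) :=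
  if x.val ≤ a.val then (x.val : ZMod (m + 1)) else ((x.val + 1 : ℕ) : ZMod (m + 1))

/-- Factoring out the close-to-the-border diagonal cutting off the vertex `v`:
the diagonal becomes a border edge of the smaller polygon, all other diagonals unchanged. -/
def contract (m : ℕ) (v : ZMod (m + 1)) (Δ : Set (Sym2 (ZMod (m + 1)))) :
    Set (Sym2 (ZMod m)) :=
  Sym2.map (delVtx m v) '' (Δ \ {cutDiag (m + 1) v})

/-- An edge of the triangulated polygon: a diagonal of `Δ` or a border edge. -/
def IsEdge (m : ℕ) (Δ : Set (Sym2 (ZMod m))) (p : Sym2 (ZMod m)) : Prop :=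
  p ∈ Δ ∨ ∃ a : ZMod m, p = s(a, a + 1)

/-- The arrow relation of the quiver `Q_Δ`: an arrow `p → q` when the diagonals `p` and `q`
bound a common triangle of `Δ` and `q` is obtained from `p` by anticlockwise rotation about
their common endpoint. -/
def Arrow (m : ℕ) (Δ : Set (Sym2 (ZMod m))) (p q : Sym2 (ZMod m)) : Prop :=
  p ∈ Δ ∧ q ∈ Δ ∧
    ∃ a b c : ZMod m, p = s(a, b) ∧ q = s(a, c) ∧ IsEdge m Δ s(b, c) ∧ Btw m b c a

/-- Fomin–Zelevinsky mutation of an arrow relation (quiver with no loops, no 2-cycles and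
no multiple arrows) at the vertex `k`. -/
def mutArrow (m : ℕ) (A : Sym2 (ZMod m) → Sym2 (ZMod m) → Prop) (k p q : Sym2 (ZMod m)) :
    Prop :=
  (p = k ∧ A q k) ∨
  (p ≠ k ∧ q = k ∧ A k p) ∨
  (p ≠ k ∧ q ≠ k ∧
    ((A p k ∧ A k q ∧ ¬ A q p) ∨ (A p q ∧ ¬ (A q k ∧ A k p))))


section

variable {m : ℕ}

theorem not_btw_self_left (a b : ZMod m) : ¬ Btw m a a b := by
  simp [Btw]

theorem not_btw_self_right (a b : ZMod m) : ¬ Btw m a b b :=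
  fun h => h.2.false

theorem not_crosses_self (p : Sym2 (ZMod m)) : ¬ Crosses m p p := by
  rintro ⟨a, b, c, d, rfl, hcd, hc, -⟩
  rcases Sym2.eq_iff.1 hcd with ⟨rfl, -⟩ | ⟨-, rfl⟩
  exacts [not_btw_self_left a b hc, not_btw_self_right a b hc]

theorem isPolyDiag_zero_two (hm : 4 ≤ m) : IsPolyDiag m s(0, 2) := by
  have : NeZero m := ⟨by omega⟩
  have h2 : (2 : ZMod m).val = 2 := ZMod.val_ofNat_of_lt (show 2 < m by omega)
  have hneg2 : (-2 : ZMod m).val = m - 2 := by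
    rw [ZMod.neg_val', h2, Nat.mod_eq_of_lt (show m - 2 < m by omega)]
  intro a b hab
  rcases Sym2.eq_iff.1 hab with ⟨rfl, rfl⟩ | ⟨rfl, rfl⟩ <;>
    simp only [sub_zero, zero_sub, h2, hneg2] <;> omega

/-- Rotating a diagonal by one vertex moves each endpoint strictly inside the arc cut off by
the diagonal on its side, so the two diagonals cross. -/
theorem IsPolyDiag.crosses_map_add_one {a b : ZMod m} (h : IsPolyDiag m s(a, b)) :
    Crosses m s(a, b) s(a + 1, b + 1) := by
  obtain ⟨hab, hba⟩ := h a b rfl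
  have h1 : (1 : ZMod m).val = 1 := ZMod.val_one'' <| by
    rintro rfl
    simp [Subsingleton.elim (b - a) 0] at hab
  refine ⟨a, b, a + 1, b + 1, rfl, rfl, ?_, ?_⟩ <;>
    simp only [Btw, add_sub_cancel_left, h1] <;> omega

theorem IsTriangulation.nonempty {Δ : Set (Sym2 (ZMod m))} (hm : 4 ≤ m)
    (hΔ : IsTriangulation m Δ) : Δ.Nonempty := by
  rw [Set.nonempty_iff_ne_empty]
  rintro rfl
  have hsingleton := hΔ.2.2 {s(0, 2)} (Set.empty_subset _)
    (fun p hp => (Set.mem_singleton_iff.1 hp) ▸ isPolyDiag_zero_two hm)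
    (fun p hp q hq => (Set.mem_singleton_iff.1 hp) ▸ (Set.mem_singleton_iff.1 hq) ▸
      not_crosses_self _)
  exact Set.singleton_ne_empty _ hsingleton

theorem IsTriangulation.rotate_one_ne {Δ : Set (Sym2 (ZMod m))} (hm : 4 ≤ m)
    (hΔ : IsTriangulation m Δ) : rotate m 1 Δ ≠ Δ := by
  intro hfix
  obtain ⟨p, hp⟩ := hΔ.nonempty hm
  induction p using Sym2.ind with
  | _ a b =>
  have hrot : s(a + 1, b + 1) ∈ Δ := hfix ▸ Set.mem_image_of_mem _ hp
  exact hΔ.2.1 _ hp _ hrot (hΔ.1 _ hp).crosses_map_add_one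

theorem rotate_zero (Δ : Set (Sym2 (ZMod m))) : rotate m 0 Δ = Δ := by
  simp [rotate]

theorem mem_rotOrbit_self (Δ : Set (Sym2 (ZMod m))) : Δ ∈ rotOrbit m Δ :=
  ⟨0, (rotate_zero Δ).symm⟩

theorem rotate_mem_rotOrbit (k : ZMod m) (Δ : Set (Sym2 (ZMod m))) :
    rotate m k Δ ∈ rotOrbit m Δ :=
  ⟨k, rfl⟩

theorem rotOrbit_finite [NeZero m] (Δ : Set (Sym2 (ZMod m))) : (rotOrbit m Δ).Finite :=
  (Set.finite_range fun k => rotate m k Δ).subset fun _ ⟨k, hk⟩ => ⟨k, hk.symm⟩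

theorem two_le_ncard_rotOrbit [NeZero m] {Δ : Set (Sym2 (ZMod m))} {k : ZMod m}
    (hk : rotate m k Δ ≠ Δ) : 2 ≤ (rotOrbit m Δ).ncard :=
  (Set.one_lt_ncard_iff (rotOrbit_finite Δ)).2
    ⟨_, _, rotate_mem_rotOrbit k Δ, mem_rotOrbit_self Δ, hk⟩

end

/-- For `n ≥ 1`, no triangulation of the `(n+3)`-gon is fixed by the rotation through one
vertex; equivalently every rotation orbit has size at least `2`. -/
theorem orbit_size_ge_two (n : ℕ) (hn : 1 ≤ n) (Δ : Set (Sym2 (ZMod (n + 3))))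
    (hΔ : IsTriangulation (n + 3) Δ) :
    rotate (n + 3) 1 Δ ≠ Δ ∧ 2 ≤ (rotOrbit (n + 3) Δ).ncard := by
  have hfix := hΔ.rotate_one_ne (by omega)
  exact ⟨hfix, two_le_ncard_rotOrbit hfix⟩

end CTA
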